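/- Let N ≥ 1, let f : ℂ^N → ℂ^N be a regular endomorphism of algebraic degree d ≥ 2, and let x ∈ ℂ^N. Then the backward orbit {z ∈ ℂ^N : f^{∘n}(z) = x for some n ≥ 1} is bounded in ℂ^N: there exists R > 0 (depending on f and x) such that every z in the backward orbit of x satisfies ‖z‖ ≤ R. -/

import Mathlib

noncomputable section

/-- The house `C(α)` of an algebraic number `α ∈ ℂ`: the maximum of the absolute values of
the complex roots of its minimal polynomial over `ℚ` (equivalently, of `σ(α)` over all
embeddings `σ : ℚ(α) ↪ ℂ`). -/
def house (α : ℂ) : ℝ :=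
  sSup ((fun β : ℂ => ‖β‖) '' {β : ℂ | Polynomial.aeval β (minpoly ℚ α) = 0})

/-- The self-map of `𝔸^N(ℂ)` induced by an `N`-tuple of polynomials. -/
def evalMap {N : ℕ} (f : Fin N → MvPolynomial (Fin N) ℂ) (z : Fin N → ℂ) : Fin N → ℂ :=
  fun i => MvPolynomial.eval z (f i)

/-- A polynomial has all of its coefficients in the subfield `K` of `ℂ`. -/
def CoeffsIn {n : ℕ} (K : Subfield ℂ) (p : MvPolynomial (Fin n) ℂ) : Prop :=
  ∀ m, MvPolynomial.coeff m p ∈ K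

/-- `z` is preperiodic under `F`. -/
def IsPreperiodicPt {X : Type*} (F : X → X) (z : X) : Prop :=
  ∃ n m : ℕ, 0 < m ∧ F^[n + m] z = F^[n] z

/-- `f = (f_1, …, f_N)` is a regular endomorphism of `𝔸^N` of algebraic degree `d`:
every `f_j` has total degree `d` and the common zero locus of the top-degree homogeneous
parts `f_j^+` is `{0}`. -/
def IsRegularEndo {N : ℕ} (f : Fin N → MvPolynomial (Fin N) ℂ) (d : ℕ) : Prop :=
  (∀ j, (f j).totalDegree = d) ∧
  ∀ z : Fin N → ℂ,
    (∀ j, MvPolynomial.eval z (MvPolynomial.homogeneousComponent d (f j)) = 0) → z = 0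

/-!
Write `f = f_h + r` with `deg r ≤ d - 1`. Since `f_h` is homogeneous with `f_h⁻¹(0) = {0}`,
compactness of the unit sphere gives `‖f_h(z)‖ ≥ c‖z‖^d` with `c > 0`, so `‖f(z)‖ ≥ ‖z‖` once `‖z‖`
is large, as `d ≥ 2`. Hence for large `R` the region `‖z‖ > R` is mapped into itself by `f`, and
if also `R ≥ ‖x‖` no point of it ever reaches `x`.
-/

open MvPolynomial

namespace MvPolynomial

theorem IsHomogeneous.eval_smul {R σ : Type*} [CommSemiring R] [Fintype σ]
    {p : MvPolynomial σ R} {n : ℕ} (hp : p.IsHomogeneous n) (t : R) (z : σ → R) :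
    eval (t • z) p = t ^ n * eval z p := by
  rw [eval_eq', eval_eq', Finset.mul_sum]
  refine Finset.sum_congr rfl fun m hm => ?_
  have hdeg : ∑ i, m i = n := by
    simpa [Finsupp.weight_apply, Finsupp.sum_fintype] using hp (mem_support_iff.mp hm)
  simp only [Pi.smul_apply, smul_eq_mul, mul_pow, Finset.prod_mul_distrib,
    Finset.prod_pow_eq_pow_sum, hdeg]
  ring

theorem totalDegree_sub_homogeneousComponent_le {R σ : Type*} [CommRing R]
    {p : MvPolynomial σ R} {n : ℕ} (hp : p.totalDegree ≤ n) :
    (p - homogeneousComponent n p).totalDegree ≤ n - 1 := by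
  refine Finset.sup_le fun m hm => ?_
  rw [mem_support_iff, coeff_sub, coeff_homogeneousComponent] at hm
  have hmn : m.degree ≠ n := fun h => hm (by simp [h])
  have hle : m.degree ≤ n := by
    rw [if_neg hmn, sub_zero] at hm
    exact (le_totalDegree (mem_support_iff.mpr hm)).trans hp
  show m.degree ≤ n - 1
  omega

theorem norm_eval_le_of_totalDegree_le {𝕜 σ : Type*} [NormedField 𝕜] [Fintype σ]
    {p : MvPolynomial σ 𝕜} {k : ℕ} (hp : p.totalDegree ≤ k) {z : σ → 𝕜} (hz : 1 ≤ ‖z‖) :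
    ‖eval z p‖ ≤ (∑ m ∈ p.support, ‖coeff m p‖) * ‖z‖ ^ k := by
  rw [eval_eq', Finset.sum_mul]
  refine (norm_sum_le _ _).trans (Finset.sum_le_sum fun m hm => ?_)
  rw [norm_mul, norm_prod]
  gcongr
  calc ∏ i, ‖z i ^ m i‖ ≤ ∏ i, ‖z‖ ^ m i := by
        gcongr with i; rw [norm_pow]; gcongr; exact norm_le_pi_norm z i
    _ = ‖z‖ ^ m.degree := by rw [Finset.prod_pow_eq_pow_sum, Finsupp.degree_eq_sum]
    _ ≤ ‖z‖ ^ k := pow_le_pow_right₀ hz ((le_totalDegree hm).trans hp)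

theorem exists_pos_mul_norm_pow_le_norm_eval {𝕜 σ ι : Type*} [RCLike 𝕜] [Fintype σ]
    [Fintype ι] {g : ι → MvPolynomial σ 𝕜} {n : ℕ} (hn : 0 < n)
    (hg : ∀ i, (g i).IsHomogeneous n) (hzero : ∀ z : σ → 𝕜, (∀ i, eval z (g i) = 0) → z = 0) :
    ∃ c > 0, ∀ z : σ → 𝕜, c * ‖z‖ ^ n ≤ ‖fun i => eval z (g i)‖ := by
  have hcont : Continuous fun z : σ → 𝕜 => ‖fun i => eval z (g i)‖ :=
    (continuous_pi fun i => continuous_eval (g i)).norm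
  have hpos : ∀ u ∈ Metric.sphere (0 : σ → 𝕜) 1, 0 < ‖fun i => eval u (g i)‖ := by
    intro u hu
    refine norm_pos_iff.mpr fun h => ?_
    have hu0 := hzero u fun i => congrFun h i
    simp [hu0] at hu
  obtain ⟨c, hc, hcle⟩ :=
    (isCompact_sphere (0 : σ → 𝕜) 1).exists_forall_le' hcont.continuousOn hpos
  refine ⟨c, hc, fun z => ?_⟩
  rcases eq_or_ne z 0 with rfl | hz
  · simp [zero_pow hn.ne', norm_nonneg]
  have hz' : 0 < ‖z‖ := norm_pos_iff.mpr hz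
  set u : σ → 𝕜 := (‖z‖⁻¹ : 𝕜) • z
  have hu : u ∈ Metric.sphere (0 : σ → 𝕜) 1 := by simp [u, norm_smul, hz'.ne']
  have hzu : z = (‖z‖ : 𝕜) • u := by simp [u, smul_smul, hz'.ne']
  have hgz : (fun i => eval z (g i)) = (‖z‖ : 𝕜) ^ n • fun i => eval u (g i) := by
    conv_lhs => rw [hzu]
    ext i
    exact (hg i).eval_smul _ _
  rw [hgz, norm_smul, norm_pow, RCLike.norm_ofReal, abs_of_pos hz', mul_comm]
  gcongr
  exact hcle u hu

end MvPolynomial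

theorem exists_forall_norm_le_norm_of_pow_dominant {E F : Type*} [SeminormedAddCommGroup E]
    [SeminormedAddCommGroup F] {Φ Ψ : E → F} {c C : ℝ} {d : ℕ} (hd : 2 ≤ d) (hc : 0 < c)
    (hΨ : ∀ w, c * ‖w‖ ^ d ≤ ‖Ψ w‖) (hΦΨ : ∀ w, 1 ≤ ‖w‖ → ‖Φ w - Ψ w‖ ≤ C * ‖w‖ ^ (d - 1)) :
    ∃ R₀, ∀ w, R₀ ≤ ‖w‖ → ‖w‖ ≤ ‖Φ w‖ := by
  refine ⟨max 1 ((C + 1) / c), fun w hw => ?_⟩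
  have hw1 : 1 ≤ ‖w‖ := (le_max_left _ _).trans hw
  have hCw : C + 1 ≤ c * ‖w‖ := by
    rw [← div_le_iff₀' hc]
    exact (le_max_right _ _).trans hw
  have hpow : ‖w‖ ^ d = ‖w‖ ^ (d - 1) * ‖w‖ := by
    rw [← pow_succ, Nat.sub_add_cancel (by omega)]
  calc ‖w‖ ≤ ‖w‖ ^ (d - 1) := le_self_pow₀ hw1 (by omega)
    _ ≤ ‖w‖ ^ (d - 1) * (c * ‖w‖ - C) := le_mul_of_one_le_right (by positivity) (by linarith)
    _ = c * ‖w‖ ^ d - C * ‖w‖ ^ (d - 1) := by rw [hpow]; ring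
    _ ≤ ‖Ψ w‖ - ‖Φ w - Ψ w‖ := sub_le_sub (hΨ w) (hΦΨ w hw1)
    _ ≤ ‖Φ w‖ := by linarith [norm_sub_norm_le (Ψ w) (Φ w), norm_sub_rev (Φ w) (Ψ w)]

theorem IsRegularEndo.exists_forall_norm_le_norm_evalMap {N d : ℕ}
    {f : Fin N → MvPolynomial (Fin N) ℂ} (hreg : IsRegularEndo f d) (hd : 2 ≤ d) :
    ∃ R₀, ∀ w, R₀ ≤ ‖w‖ → ‖w‖ ≤ ‖evalMap f w‖ := by
  set g := fun j => homogeneousComponent d (f j)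
  obtain ⟨c, hc, hg⟩ := exists_pos_mul_norm_pow_le_norm_eval (g := g) (by omega)
    (fun j => homogeneousComponent_isHomogeneous d (f j)) hreg.2
  set C : Fin N → ℝ := fun j => ∑ m ∈ (f j - g j).support, ‖coeff m (f j - g j)‖
  refine exists_forall_norm_le_norm_of_pow_dominant (C := ∑ j, C j) hd hc hg fun w hw => ?_
  refine (pi_norm_le_iff_of_nonneg (by positivity)).mpr fun j => ?_
  calc ‖evalMap f w j - eval w (g j)‖ = ‖eval w (f j - g j)‖ := by simp [evalMap]
    _ ≤ C j * ‖w‖ ^ (d - 1) :=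
      norm_eval_le_of_totalDegree_le (totalDegree_sub_homogeneousComponent_le (hreg.1 j).le) hw
    _ ≤ (∑ j, C j) * ‖w‖ ^ (d - 1) := by
      gcongr
      exact Finset.single_le_sum (fun _ _ => by positivity) (Finset.mem_univ j)

theorem backward_orbit_bounded_general
    (N : ℕ)
    (f : Fin N → MvPolynomial (Fin N) ℂ)
    (d : ℕ) (hd : 2 ≤ d) (hreg : IsRegularEndo f d)
    (x : Fin N → ℂ) :
    ∃ R : ℝ, 0 < R ∧ ∀ z : Fin N → ℂ,
      (∃ n : ℕ, 1 ≤ n ∧ (evalMap f)^[n] z = x) → ‖z‖ ≤ R := by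
  obtain ⟨R₀, hR₀⟩ := hreg.exists_forall_norm_le_norm_evalMap hd
  set R := max 1 (max R₀ ‖x‖)
  have hmaps : Set.MapsTo (evalMap f) {w | R < ‖w‖} {w | R < ‖w‖} := fun w (hw : R < ‖w‖) =>
    hw.trans_le (hR₀ w (((le_max_left _ _).trans (le_max_right _ _)).trans hw.le))
  refine ⟨R, by positivity, fun z ⟨n, _, hzx⟩ => not_lt.mp fun hz => ?_⟩
  have hx : R < ‖x‖ := hzx ▸ hmaps.iterate n hz
  exact hx.not_ge ((le_max_right _ _).trans (le_max_right _ _))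

/-- The backward orbit of any point under a regular endomorphism of `ℂ^N` of algebraic
degree `d ≥ 2` is bounded. -/
theorem backward_orbit_bounded
    (N : ℕ) (hN : 1 ≤ N)
    (f : Fin N → MvPolynomial (Fin N) ℂ)
    (d : ℕ) (hd : 2 ≤ d) (hreg : IsRegularEndo f d)
    (x : Fin N → ℂ) :
    ∃ R : ℝ, 0 < R ∧ ∀ z : Fin N → ℂ,
      (∃ n : ℕ, 1 ≤ n ∧ (evalMap f)^[n] z = x) → ‖z‖ ≤ R :=
  backward_orbit_bounded_general N f d hd hreg x
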